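/- arXiv:2412.03313 — 4 statements merged into one kernel-verified Lean document; each statement's English description precedes it below -/
import Mathlib

section
/- Let K be a number field, F an irreducible polynomial in K[X], and L/K the splitting field of F. If Gal(L/K) is abelian, then for any place v of K, either F splits completely over the completion K_v, or F has no roots in K_v. -/
/-!
In an abelian Galois extension every subextension is normal. So if `α` is a root of `F` in its
splitting field `L`, the field `K⟮α⟯` is normal over `K` and therefore contains all roots of `F`,
i.e. `L = K⟮α⟯`. Consequently any root `x` of `F` in a field `M` (such as a completion `K_v`)
gives a `K`-embedding `L → M`, `α ↦ x`, through which `F` splits over `M`.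
-/

open Polynomial NumberField IsDedekindDomain

section

open IntermediateField

variable {K L : Type*} [Field K] [Field L] [Algebra K L]

theorem IntermediateField.normal_of_commute [FiniteDimensional K L] [IsGalois K L]
    (hab : ∀ σ τ : L ≃ₐ[K] L, σ * τ = τ * σ) (E : IntermediateField K L) : Normal K E := by
  have : E.fixingSubgroup.Normal := ⟨fun n hn g ↦ by rwa [hab g n, mul_inv_cancel_right]⟩
  rw [← IsGalois.fixedField_fixingSubgroup E]
  infer_instance

namespace Polynomial

variable {F : K[X]} [F.IsSplittingField K L]

theorem adjoin_root_eq_top_of_normal (hF : Irreducible F) {α : L} (hα : aeval α F = 0)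
    [Normal K K⟮α⟯] : K⟮α⟯ = ⊤ := by
  have hmin {β : L} (hβ : aeval β F = 0) : minpoly K β = F * C F.leadingCoeff⁻¹ :=
    (minpoly.eq_of_irreducible hF hβ).symm
  rw [← top_le_iff, ← (isSplittingField_iff_intermediateField.mp ‹_›).2, adjoin_le_iff]
  intro β hβ
  refine (isAlgebraic_of_mem_rootSet hβ).isIntegral.mem_intermediateField_of_minpoly_splits ?_
  rw [hmin (mem_rootSet.mp hβ).2, ← hmin hα, ← minpoly_gen]
  exact Normal.splits ‹_› _

theorem splits_of_adjoin_root_eq_top (hF : Irreducible F) {α : L} (hα : aeval α F = 0)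
    (htop : K⟮α⟯ = ⊤) {M : Type*} [Field M] [Algebra K M] {x : M} (hx : aeval x F = 0) :
    (F.map (algebraMap K M)).Splits := by
  have hmin : minpoly K α = F * C F.leadingCoeff⁻¹ := (minpoly.eq_of_irreducible hF hα).symm
  have hint : IsIntegral K α := IsAlgebraic.isIntegral ⟨F, hF.ne_zero, hα⟩
  have hx' : x ∈ (minpoly K α).aroots M :=
    mem_aroots.mpr ⟨minpoly.ne_zero hint, by simp [hmin, hx]⟩
  let φ : K⟮α⟯ →ₐ[K] M := (algHomAdjoinIntegralEquiv K hint).symm ⟨x, hx'⟩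
  exact (IsSplittingField.splits L F).of_algHom
    (φ.comp ((equivOfEq htop).trans topEquiv).symm.toAlgHom)

theorem splits_of_aeval_eq_zero_of_commute (hF : Irreducible F) (hsep : F.Separable)
    (hab : ∀ σ τ : L ≃ₐ[K] L, σ * τ = τ * σ) {M : Type*} [Field M] [Algebra K M] {x : M}
    (hx : aeval x F = 0) : (F.map (algebraMap K M)).Splits := by
  have : FiniteDimensional K L := IsSplittingField.finiteDimensional L F
  have : IsGalois K L := IsGalois.of_separable_splitting_field hsep
  obtain ⟨α, hα⟩ := (IsSplittingField.splits L F).exists_eval_eq_zero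
    (by rw [degree_map]; exact (degree_pos_of_irreducible hF).ne')
  rw [eval_map_algebraMap] at hα
  have : Normal K K⟮α⟯ := normal_of_commute hab _
  exact splits_of_adjoin_root_eq_top hF hα (adjoin_root_eq_top_of_normal hF hα) hx

theorem splits_or_forall_aeval_ne_zero_of_commute (hF : Irreducible F) (hsep : F.Separable)
    (hab : ∀ σ τ : L ≃ₐ[K] L, σ * τ = τ * σ) (M : Type*) [Field M] [Algebra K M] :
    (F.map (algebraMap K M)).Splits ∨ ∀ x : M, aeval x F ≠ 0 := by
  refine or_iff_not_imp_right.mpr fun h ↦ ?_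
  push Not at h
  obtain ⟨x, hx⟩ := h
  exact splits_of_aeval_eq_zero_of_commute hF hsep hab hx

end Polynomial

end

/-- If `F` is irreducible over a number field `K` and the Galois group of its splitting
field is abelian, then at every place `v` of `K` (infinite or finite), `F` either splits
completely over the completion `K_v` or has no roots in `K_v`. -/
theorem abelian_splitting_field_all_or_no_roots_in_completion
    (K : Type*) [Field K] [NumberField K]
    (F : K[X]) (hF : Irreducible F)
    (hab : ∀ σ τ : F.SplittingField ≃ₐ[K] F.SplittingField, σ * τ = τ * σ) :
    (∀ v : InfinitePlace K,
      (F.map (algebraMap K v.Completion)).Splits ∨ ∀ x : v.Completion, aeval x F ≠ 0) ∧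
    (∀ v : HeightOneSpectrum (𝓞 K),
      (F.map (algebraMap K (v.adicCompletion K))).Splits ∨
        ∀ x : v.adicCompletion K, aeval x F ≠ 0) := by
  have key := splits_or_forall_aeval_ne_zero_of_commute hF hF.separable hab
  exact ⟨fun v ↦ key _, fun v ↦ key _⟩
end

section
/- Let c ∈ ℝ and f(X) = X² + c. The Julia set of f is contained in ℝ if and only if c ≤ −2. -/
/-!
For `c ≤ -2` write `c = β - β²` with `β ≥ 2` the repelling fixed point. A bounded orbit stays in
the disc of radius `β`, so `Re f(z) ≥ -β` along it, which forces `Re(z)² ≥ Im(z)² + β² - 2β`.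
Together with the factorisation `β² - f(z)² = (β² - z²)(z² - (β² - 2β))` this makes
`Im(z)² / |β² - z²|` at least double at each step, while it never exceeds `1/2`; hence bounded
orbits are real.

For `c > -2` there is a non-real point with finite orbit (a preimage of `-β`, or a non-real fixed
point). The filled Julia set is bounded, so the upper half-plane joins this point to the exterior
and must cross the boundary.
-/

open Bornology

/-- The filled Julia set of the map `z ↦ z² + c`. -/
def filledJuliaQuadratic (c : ℝ) : Set ℂ :=
  {z : ℂ | IsBounded (Set.range fun n : ℕ => (fun w : ℂ => w ^ 2 + (c : ℂ))^[n] z)}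

open Function Set Complex

theorem IsPreconnected.inter_frontier_nonempty {X : Type*} [TopologicalSpace X] {s t : Set X}
    (hs : IsPreconnected s) (hst : (s ∩ t).Nonempty) (hst' : (s \ t).Nonempty) :
    (s ∩ frontier t).Nonempty := by
  by_contra h
  have hcover : s ⊆ interior t ∪ (closure t)ᶜ := by
    intro x hx
    by_cases hxt : x ∈ closure t
    · rw [closure_eq_interior_union_frontier] at hxt
      exact .inl (hxt.resolve_right fun hfr => h ⟨x, hx, hfr⟩)
    · exact .inr hxt
  have hint : (s ∩ interior t).Nonempty := by
    obtain ⟨x, hxs, hxt⟩ := hst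
    exact ⟨x, hxs, (hcover hxs).resolve_right (not_not_intro (subset_closure hxt))⟩
  have hext : (s ∩ (closure t)ᶜ).Nonempty := by
    obtain ⟨x, hxs, hxt⟩ := hst'
    exact ⟨x, hxs, (hcover hxs).resolve_left fun hx => hxt (interior_subset hx)⟩
  obtain ⟨x, -, hxi, hxc⟩ := hs _ _ isOpen_interior isClosed_closure.isOpen_compl hcover hint hext
  exact hxc (interior_subset_closure hxi)

theorem isBounded_range_iterate_of_isFixedPt {α : Type*} [PseudoMetricSpace α] {f : α → α}
    {x : α} {n : ℕ} (h : IsFixedPt f (f^[n] x)) : IsBounded (range fun k => f^[k] x) := by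
  refine ((finite_Iic n).image fun k => f^[k] x).isBounded.subset ?_
  rintro _ ⟨k, rfl⟩
  rcases le_total k n with hk | hk
  · exact ⟨k, hk, rfl⟩
  · obtain ⟨j, rfl⟩ := Nat.exists_eq_add_of_le hk
    exact ⟨n, mem_Iic.mpr le_rfl, by simp only [add_comm n j, iterate_add_apply, (h.iterate j).eq]⟩

theorem mem_filledJuliaQuadratic {c : ℝ} {z : ℂ} :
    z ∈ filledJuliaQuadratic c ↔
      IsBounded (range fun n : ℕ => (fun w : ℂ => w ^ 2 + (c : ℂ))^[n] z) :=
  Iff.rfl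

theorem iterate_mem_filledJuliaQuadratic {c : ℝ} {z : ℂ} (hz : z ∈ filledJuliaQuadratic c)
    (n : ℕ) : (fun w : ℂ => w ^ 2 + (c : ℂ))^[n] z ∈ filledJuliaQuadratic c := by
  refine (mem_filledJuliaQuadratic.mp hz).subset ?_
  rintro _ ⟨k, rfl⟩
  exact ⟨k + n, iterate_add_apply _ k n z⟩

theorem add_two_mul_sub_le_norm_sq_add {c R : ℝ} (hR : 1 ≤ R) (hc : |c| ≤ R ^ 2 - R) {w : ℂ}
    (hw : R ≤ ‖w‖) : R + 2 * (‖w‖ - R) ≤ ‖w ^ 2 + (c : ℂ)‖ := by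
  have h := norm_le_add_norm_add (w ^ 2) (c : ℂ)
  rw [norm_pow, norm_real, Real.norm_eq_abs] at h
  nlinarith

theorem norm_le_of_mem_filledJuliaQuadratic {c R : ℝ} (hR : 1 ≤ R) (hc : |c| ≤ R ^ 2 - R)
    {z : ℂ} (hz : z ∈ filledJuliaQuadratic c) : ‖z‖ ≤ R := by
  by_contra! hzR
  set F := fun w : ℂ => w ^ 2 + (c : ℂ)
  have hescape : ∀ k : ℕ, R + 2 ^ k * (‖z‖ - R) ≤ ‖F^[k] z‖ := by
    intro k
    induction k with
    | zero => simp
    | succ k ih =>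
      rw [iterate_succ_apply']
      have hk : R ≤ ‖F^[k] z‖ := le_trans (by nlinarith [pow_pos (two_pos : (0:ℝ) < 2) k]) ih
      calc R + 2 ^ (k + 1) * (‖z‖ - R) ≤ R + 2 * (‖F^[k] z‖ - R) := by rw [pow_succ]; nlinarith
        _ ≤ _ := add_two_mul_sub_le_norm_sq_add hR hc hk
  obtain ⟨C, hC⟩ := isBounded_iff_forall_norm_le.mp (mem_filledJuliaQuadratic.mp hz)
  obtain ⟨k, hk⟩ := pow_unbounded_of_one_lt ((C - R) / (‖z‖ - R)) one_lt_two
  rw [div_lt_iff₀ (sub_pos.mpr hzR)] at hk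
  linarith [hescape k, hC _ ⟨k, rfl⟩]

theorem isBounded_filledJuliaQuadratic (c : ℝ) : IsBounded (filledJuliaQuadratic c) :=
  (Metric.isBounded_closedBall (x := 0) (r := |c| + 1)).subset fun _ hz =>
    mem_closedBall_zero_iff.mpr <| norm_le_of_mem_filledJuliaQuadratic
      (by linarith [abs_nonneg c]) (by nlinarith [abs_nonneg c]) hz

theorem exists_eq_sub_sq {c : ℝ} (hc : c ≤ 1 / 4) : ∃ β : ℝ, 1 / 2 ≤ β ∧ c = β - β ^ 2 := by
  have hdisc : 0 ≤ 1 - 4 * c := by linarith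
  exact ⟨(1 + √(1 - 4 * c)) / 2, by linarith [Real.sqrt_nonneg (1 - 4 * c)],
    by nlinarith [Real.sq_sqrt hdisc]⟩

theorem sq_sub_two_mul_add_im_sq_le_re_sq {β : ℝ} {z : ℂ}
    (hz : -β ≤ (z ^ 2 + ((β - β ^ 2 : ℝ) : ℂ)).re) : β ^ 2 - 2 * β + z.im ^ 2 ≤ z.re ^ 2 := by
  simp only [add_re, ofReal_re, pow_two, mul_re] at hz
  nlinarith

theorem norm_sq_sub_ofReal_le {d : ℝ} (hd : 0 ≤ d) {z : ℂ} (h : d + z.im ^ 2 ≤ z.re ^ 2) :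
    ‖z ^ 2 - d‖ ≤ 2 * z.re ^ 2 :=
  calc ‖z ^ 2 - d‖ ≤ ‖z‖ ^ 2 + d := by
        have h := norm_sub_le (z ^ 2) (d : ℂ)
        rwa [norm_pow, norm_real, Real.norm_of_nonneg hd] at h
    _ = z.re ^ 2 + z.im ^ 2 + d := by rw [Complex.sq_norm, normSq_apply]; ring
    _ ≤ 2 * z.re ^ 2 := by linarith

theorem two_mul_im_sq_le_norm_ofReal_sub_sq (a : ℝ) {z : ℂ} (h : z.im ^ 2 ≤ z.re ^ 2) :
    2 * z.im ^ 2 ≤ ‖(a : ℂ) - z ^ 2‖ := by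
  have him : ((a : ℂ) - z ^ 2).im = -(2 * z.re * z.im) := by
    simp only [pow_two, sub_im, ofReal_im, mul_im, zero_sub]
    ring
  have habs : |z.im| ≤ |z.re| := sq_le_sq.mp h
  calc 2 * z.im ^ 2 = 2 * |z.im| * |z.im| := by rw [mul_assoc, abs_mul_abs_self, sq]
    _ ≤ 2 * |z.re| * |z.im| := by gcongr
    _ = |((a : ℂ) - z ^ 2).im| := by rw [him, abs_neg, abs_mul, abs_mul, abs_two]
    _ ≤ _ := abs_im_le_norm _

theorem norm_sq_sub_sq_add_le {β : ℝ} (hβ : 2 ≤ β) {z : ℂ}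
    (hz : -β ≤ (z ^ 2 + ((β - β ^ 2 : ℝ) : ℂ)).re) :
    ‖(β ^ 2 : ℂ) - (z ^ 2 + ((β - β ^ 2 : ℝ) : ℂ)) ^ 2‖ ≤
      2 * z.re ^ 2 * ‖(β ^ 2 : ℂ) - z ^ 2‖ := by
  have hfactor : (β ^ 2 : ℂ) - (z ^ 2 + ((β - β ^ 2 : ℝ) : ℂ)) ^ 2 =
      ((β ^ 2 : ℂ) - z ^ 2) * (z ^ 2 - ((β ^ 2 - 2 * β : ℝ) : ℂ)) := by
    push_cast; ring
  have hnorm := norm_sq_sub_ofReal_le (by nlinarith) (sq_sub_two_mul_add_im_sq_le_re_sq hz)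
  rw [hfactor, norm_mul, mul_comm]
  gcongr

theorem im_sq_add_ofReal (z : ℂ) (c : ℝ) : (z ^ 2 + (c : ℂ)).im = 2 * z.re * z.im := by
  simp only [pow_two, add_im, mul_im, ofReal_im, add_zero]
  ring

theorem neg_le_re_sq_add_of_mem_filledJuliaQuadratic {β : ℝ} (hβ : 2 ≤ β) {z : ℂ}
    (hz : z ∈ filledJuliaQuadratic (β - β ^ 2)) : -β ≤ (z ^ 2 + ((β - β ^ 2 : ℝ) : ℂ)).re := by
  have hnorm := norm_le_of_mem_filledJuliaQuadratic (R := β) (by linarith)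
    (by rw [abs_of_nonpos (by nlinarith)]; linarith) (iterate_mem_filledJuliaQuadratic hz 1)
  exact (abs_le.mp ((abs_re_le_norm _).trans hnorm)).1

theorem two_pow_mul_im_sq_mul_norm_le {β : ℝ} (hβ : 2 ≤ β) {z : ℂ}
    (hz : z ∈ filledJuliaQuadratic (β - β ^ 2)) (n : ℕ) :
    2 ^ n * z.im ^ 2 * ‖(β ^ 2 : ℂ) - ((fun w : ℂ => w ^ 2 + ((β - β ^ 2 : ℝ) : ℂ))^[n] z) ^ 2‖ ≤
      ((fun w : ℂ => w ^ 2 + ((β - β ^ 2 : ℝ) : ℂ))^[n] z).im ^ 2 * ‖(β ^ 2 : ℂ) - z ^ 2‖ := by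
  set F := fun w : ℂ => w ^ 2 + ((β - β ^ 2 : ℝ) : ℂ)
  induction n with
  | zero => simp
  | succ n ih =>
    have hre := neg_le_re_sq_add_of_mem_filledJuliaQuadratic hβ
      (iterate_mem_filledJuliaQuadratic hz n)
    rw [iterate_succ_apply']
    calc 2 ^ (n + 1) * z.im ^ 2 * ‖(β ^ 2 : ℂ) - (F (F^[n] z)) ^ 2‖
        ≤ 2 ^ (n + 1) * z.im ^ 2 * (2 * (F^[n] z).re ^ 2 * ‖(β ^ 2 : ℂ) - (F^[n] z) ^ 2‖) := by
          gcongr; exact norm_sq_sub_sq_add_le hβ hre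
      _ = 4 * (F^[n] z).re ^ 2 * (2 ^ n * z.im ^ 2 * ‖(β ^ 2 : ℂ) - (F^[n] z) ^ 2‖) := by ring
      _ ≤ 4 * (F^[n] z).re ^ 2 * ((F^[n] z).im ^ 2 * ‖(β ^ 2 : ℂ) - z ^ 2‖) := by gcongr
      _ = (F (F^[n] z)).im ^ 2 * ‖(β ^ 2 : ℂ) - z ^ 2‖ := by rw [im_sq_add_ofReal]; ring

theorem im_eq_zero_of_mem_filledJuliaQuadratic {β : ℝ} (hβ : 2 ≤ β) {z : ℂ}
    (hz : z ∈ filledJuliaQuadratic (β - β ^ 2)) : z.im = 0 := by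
  set F := fun w : ℂ => w ^ 2 + ((β - β ^ 2 : ℝ) : ℂ)
  have hxy : ∀ n, (F^[n] z).im ^ 2 ≤ (F^[n] z).re ^ 2 := fun n => by
    nlinarith [sq_sub_two_mul_add_im_sq_le_re_sq <|
      neg_le_re_sq_add_of_mem_filledJuliaQuadratic hβ (iterate_mem_filledJuliaQuadratic hz n)]
  by_contra hz0
  have hne : ∀ n, (F^[n] z).im ≠ 0 := by
    intro n
    induction n with
    | zero => exact hz0
    | succ n ih =>
      have hx : (F^[n] z).re ≠ 0 := fun h => ih (by nlinarith [hxy n])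
      rw [iterate_succ_apply', im_sq_add_ofReal]
      exact mul_ne_zero (mul_ne_zero two_ne_zero hx) ih
  have hbound : ∀ n, 2 ^ n * (2 * z.im ^ 2) ≤ ‖(β ^ 2 : ℂ) - z ^ 2‖ := fun n => by
    have hS := two_mul_im_sq_le_norm_ofReal_sub_sq (β ^ 2) (hxy n)
    push_cast at hS
    refine le_of_mul_le_mul_right ?_ (sq_pos_of_ne_zero (hne n))
    calc 2 ^ n * (2 * z.im ^ 2) * (F^[n] z).im ^ 2
        = 2 ^ n * z.im ^ 2 * (2 * (F^[n] z).im ^ 2) := by ring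
      _ ≤ 2 ^ n * z.im ^ 2 * ‖(β ^ 2 : ℂ) - (F^[n] z) ^ 2‖ := by gcongr
      _ ≤ (F^[n] z).im ^ 2 * ‖(β ^ 2 : ℂ) - z ^ 2‖ := two_pow_mul_im_sq_mul_norm_le hβ hz n
      _ = ‖(β ^ 2 : ℂ) - z ^ 2‖ * (F^[n] z).im ^ 2 := mul_comm _ _
  obtain ⟨n, hn⟩ := pow_unbounded_of_one_lt (‖(β ^ 2 : ℂ) - z ^ 2‖ / (2 * z.im ^ 2)) one_lt_two
  rw [div_lt_iff₀ (by positivity)] at hn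
  linarith [hbound n]

theorem exists_im_pos_mem_filledJuliaQuadratic {c : ℝ} (hc : -2 < c) :
    ∃ z : ℂ, 0 < z.im ∧ z ∈ filledJuliaQuadratic c := by
  rcases le_or_gt c (1 / 4) with hc4 | hc4
  · -- `z = i √(β + c)` lands on the real fixed point `β` after two steps: `z ↦ -β ↦ β`
    obtain ⟨β, hβ, hβc⟩ := exists_eq_sub_sq hc4
    have hr : 0 < β + c := by nlinarith
    refine ⟨√(β + c) * I, by simpa using hr,
      mem_filledJuliaQuadratic.mpr <| isBounded_range_iterate_of_isFixedPt (n := 2) ?_⟩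
    have hsq : ((√(β + c) : ℝ) : ℂ) ^ 2 = β + c := by exact_mod_cast Real.sq_sqrt hr.le
    simp only [IsFixedPt, iterate_succ_apply', iterate_zero_apply, mul_pow, I_sq, hsq]
    rw [hβc]; push_cast; ring
  · -- the fixed points `(1 ± i √(4c - 1)) / 2` are not real
    have ht : 0 < √(4 * c - 1) := Real.sqrt_pos.mpr (by linarith)
    refine ⟨(1 + √(4 * c - 1) * I) / 2, by simpa using ht,
      mem_filledJuliaQuadratic.mpr <| isBounded_range_iterate_of_isFixedPt (n := 0) ?_⟩
    have hsq : ((√(4 * c - 1) : ℝ) : ℂ) ^ 2 = 4 * c - 1 := by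
      exact_mod_cast Real.sq_sqrt (by linarith : 0 ≤ 4 * c - 1)
    simp only [IsFixedPt, iterate_zero_apply]
    linear_combination (I ^ 2 / 4) * hsq + ((4 * (c : ℂ) - 1) / 4) * I_sq

theorem exists_im_pos_mem_frontier {K : Set ℂ} (hK : IsBounded K) {z : ℂ} (hz : z ∈ K)
    (him : 0 < z.im) : ∃ w ∈ frontier K, 0 < w.im := by
  obtain ⟨R, hR⟩ := hK.subset_closedBall 0
  have hout : ((|R| + 1 : ℝ) : ℂ) * I ∉ K := fun h => by
    have := mem_closedBall_zero_iff.mp (hR h)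
    rw [norm_mul, norm_I, mul_one, norm_real, Real.norm_of_nonneg (by positivity)] at this
    linarith [le_abs_self R]
  obtain ⟨w, hw, hwK⟩ := (convex_halfSpace_im_gt 0).isPreconnected.inter_frontier_nonempty
    ⟨z, him, hz⟩ ⟨((|R| + 1 : ℝ) : ℂ) * I, by simpa using (by positivity : (0 : ℝ) < |R| + 1), hout⟩
  exact ⟨w, hwK, hw⟩

/-- The Julia set of `f(X) = X² + c`, i.e. the boundary of the filled Julia set, is
contained in `ℝ` if and only if `c ≤ -2`. -/
theorem julia_quadratic_real_iff (c : ℝ) :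
    frontier (filledJuliaQuadratic c) ⊆ Set.range ((↑) : ℝ → ℂ) ↔ c ≤ -2 := by
  constructor
  · intro h
    by_contra! hc
    obtain ⟨z, hzim, hz⟩ := exists_im_pos_mem_filledJuliaQuadratic hc
    obtain ⟨w, hw, hwim⟩ := exists_im_pos_mem_frontier (isBounded_filledJuliaQuadratic c) hz hzim
    obtain ⟨x, rfl⟩ := h hw
    simp at hwim
  · intro hc
    obtain ⟨β, hβ, rfl⟩ := exists_eq_sub_sq (hc.trans (by norm_num))
    replace hβ : 2 ≤ β := by nlinarith
    have hK : filledJuliaQuadratic (β - β ^ 2) ⊆ range ((↑) : ℝ → ℂ) := fun z hz =>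
      ⟨z.re, ext rfl (im_eq_zero_of_mem_filledJuliaQuadratic hβ hz).symm⟩
    exact frontier_subset_closure.trans
      (closure_minimal hK isUniformEmbedding_ofReal.isClosedEmbedding.isClosed_range)
end

section
/- Let f ∈ ℝ[X] have odd degree d ≥ 3 with positive leading coefficient, and let a₁ and a₂ be its smallest and largest real fixed points. Then every real preperiodic point of f lies in the interval [a₁, a₂]. -/
/-!
Write `g y = f y - y`. It has no zero outside `[a₁, a₂]`, so by the intermediate value theorem
it keeps one sign on `(a₂, ∞)` and one on `(-∞, a₁)`; since `deg f ≥ 2`, `g` has the leading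
coefficient and odd degree of `f`, so these signs are `+` and `-`. Hence the orbit of a point
right of `a₂` increases strictly and the orbit of a point left of `a₁` decreases strictly;
either way it is infinite.
-/

open Polynomial Filter Set

section SignOnPreconnected

variable {α δ : Type*} [TopologicalSpace α] [LinearOrder δ] [TopologicalSpace δ]
  [OrderClosedTopology δ] [Zero δ] {s : Set α} {φ : α → δ}

theorem IsPreconnected.pos_of_forall_ne_zero (hs : IsPreconnected s) (hφ : ContinuousOn φ s)
    (hne : ∀ y ∈ s, φ y ≠ 0) {z : α} (hz : z ∈ s) (hφz : 0 ≤ φ z) {y : α} (hy : y ∈ s) :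
    0 < φ y := by
  by_contra! hφy
  obtain ⟨w, hw, hφw⟩ := hs.intermediate_value hy hz hφ ⟨hφy, hφz⟩
  exact hne w hw hφw

theorem IsPreconnected.neg_of_forall_ne_zero (hs : IsPreconnected s) (hφ : ContinuousOn φ s)
    (hne : ∀ y ∈ s, φ y ≠ 0) {z : α} (hz : z ∈ s) (hφz : φ z ≤ 0) {y : α} (hy : y ∈ s) :
    φ y < 0 :=
  hs.pos_of_forall_ne_zero (δ := δᵒᵈ) hφ hne hz hφz hy

end SignOnPreconnected

section Iterate

variable {α : Type*} [Preorder α] {φ : α → α} {a x : α}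

theorem strictMono_iterate_of_lt_apply (h : ∀ y, a < y → y < φ y) (hx : a < x) :
    StrictMono fun n => φ^[n] x := by
  have hmem : ∀ n, a < φ^[n] x := by
    intro n
    induction n with
    | zero => exact hx
    | succ n ih => rw [Function.iterate_succ_apply']; exact ih.trans (h _ ih)
  refine strictMono_nat_of_lt_succ fun n => ?_
  rw [Function.iterate_succ_apply']
  exact h _ (hmem n)

theorem strictAnti_iterate_of_apply_lt (h : ∀ y, y < a → φ y < y) (hx : x < a) :
    StrictAnti fun n => φ^[n] x :=
  strictMono_iterate_of_lt_apply (α := αᵒᵈ) h hx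

end Iterate

namespace Polynomial

theorem tendsto_atBot_atBot_of_odd_natDegree {𝕜 : Type*} [NormedField 𝕜] [LinearOrder 𝕜]
    [IsStrictOrderedRing 𝕜] [OrderTopology 𝕜] {P : 𝕜[X]} (hodd : Odd P.natDegree)
    (hlc : 0 < P.leadingCoeff) : Tendsto (fun x => P.eval x) atBot atBot := by
  have hdeg : 0 < (P.comp (-X)).degree := by
    rw [← natDegree_pos_iff_degree_pos, natDegree_comp]
    simpa using hodd.pos
  have hlc' : (P.comp (-X)).leadingCoeff ≤ 0 := by
    rw [leadingCoeff_comp (by simp)]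
    simp [hodd.neg_one_pow, hlc.le]
  simpa [Function.comp_def] using
    (tendsto_atBot_of_leadingCoeff_nonpos _ hdeg hlc').comp tendsto_neg_atBot_atTop

section SubX

variable {R : Type*} [Ring R] {p : R[X]}

theorem natDegree_sub_X (hp : 1 < p.natDegree) : (p - X).natDegree = p.natDegree :=
  natDegree_sub_eq_left_of_natDegree_lt (natDegree_X_le.trans_lt hp)

theorem leadingCoeff_sub_X (hp : 1 < p.natDegree) : (p - X).leadingCoeff = p.leadingCoeff :=
  leadingCoeff_sub_of_degree_lt (degree_lt_degree (natDegree_X_le.trans_lt hp))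

end SubX

theorem self_lt_eval_of_fixedPoints_le {f : ℝ[X]} (hdeg : 1 < f.natDegree)
    (hlc : 0 < f.leadingCoeff) {a : ℝ} (hmax : ∀ y : ℝ, f.eval y = y → y ≤ a) {y : ℝ}
    (hy : a < y) : y < f.eval y := by
  have hg : ∀ y, (f - X).eval y = f.eval y - y := fun y => by simp
  have hne : ∀ y ∈ Ioi a, (f - X).eval y ≠ 0 := fun y hy h =>
    (hmax y (by linarith [hg y])).not_gt hy
  have hdeg' : 0 < (f - X).degree :=
    natDegree_pos_iff_degree_pos.mp (by rw [natDegree_sub_X hdeg]; omega)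
  have htop := tendsto_atTop_of_leadingCoeff_nonneg (f - X) hdeg'
    (leadingCoeff_sub_X hdeg ▸ hlc.le)
  obtain ⟨z, hz0, hz⟩ := ((htop.eventually_ge_atTop 0).and (eventually_gt_atTop a)).exists
  have hpos := isPreconnected_Ioi.pos_of_forall_ne_zero
    (f - X).continuous.continuousOn hne hz hz0 hy
  linarith [hg y]

theorem eval_lt_self_of_le_fixedPoints {f : ℝ[X]} (hdeg : 1 < f.natDegree)
    (hodd : Odd f.natDegree) (hlc : 0 < f.leadingCoeff) {a : ℝ}
    (hmin : ∀ y : ℝ, f.eval y = y → a ≤ y) {y : ℝ} (hy : y < a) : f.eval y < y := by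
  have hg : ∀ y, (f - X).eval y = f.eval y - y := fun y => by simp
  have hne : ∀ y ∈ Iio a, (f - X).eval y ≠ 0 := fun y hy h =>
    (hmin y (by linarith [hg y])).not_gt hy
  have hbot := tendsto_atBot_atBot_of_odd_natDegree (P := f - X)
    (natDegree_sub_X hdeg ▸ hodd) (leadingCoeff_sub_X hdeg ▸ hlc)
  obtain ⟨z, hz0, hz⟩ := ((hbot.eventually_le_atBot 0).and (eventually_lt_atBot a)).exists
  have hneg := isPreconnected_Iio.neg_of_forall_ne_zero
    (f - X).continuous.continuousOn hne hz hz0 hy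
  linarith [hg y]

end Polynomial

theorem preperiodic_mem_Icc_fixed_points_general
    (f : ℝ[X]) (hdeg : 3 ≤ f.natDegree) (hodd : Odd f.natDegree)
    (hlead : 0 < f.leadingCoeff)
    (a₁ a₂ : ℝ)
    (hmin : ∀ y : ℝ, f.eval y = y → a₁ ≤ y) (hmax : ∀ y : ℝ, f.eval y = y → y ≤ a₂) :
    ∀ x : ℝ, (Set.range fun n : ℕ => (fun y => f.eval y)^[n] x).Finite →
      x ∈ Set.Icc a₁ a₂ := by
  intro x hfin
  by_contra hx
  refine Set.not_infinite.mpr hfin ?_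
  rcases not_and_or.mp hx with hx | hx
  · exact Set.infinite_range_of_injective (strictAnti_iterate_of_apply_lt
      (fun _ => eval_lt_self_of_le_fixedPoints (by omega) hodd hlead hmin) (not_le.mp hx)).injective
  · exact Set.infinite_range_of_injective (strictMono_iterate_of_lt_apply
      (fun _ => self_lt_eval_of_fixedPoints_le (by omega) hlead hmax) (not_le.mp hx)).injective

/-- For a real polynomial of odd degree `d ≥ 3` with positive leading coefficient, with
smallest real fixed point `a₁` and largest real fixed point `a₂`, every real preperiodic
point (point with finite forward orbit) lies in `[a₁, a₂]`. -/
theorem preperiodic_mem_Icc_fixed_points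
    (f : ℝ[X]) (hdeg : 3 ≤ f.natDegree) (hodd : Odd f.natDegree)
    (hlead : 0 < f.leadingCoeff)
    (a₁ a₂ : ℝ) (hfix₁ : f.eval a₁ = a₁) (hfix₂ : f.eval a₂ = a₂)
    (hmin : ∀ y : ℝ, f.eval y = y → a₁ ≤ y) (hmax : ∀ y : ℝ, f.eval y = y → y ≤ a₂) :
    ∀ x : ℝ, (Set.range fun n : ℕ => (fun y => f.eval y)^[n] x).Finite →
      x ∈ Set.Icc a₁ a₂ :=
  preperiodic_mem_Icc_fixed_points_general f hdeg hodd hlead a₁ a₂ hmin hmax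
end

section
/- Let E be an elliptic curve over ℝ with Weierstrass equation y² = F(x) where F(x) = x³ + ax² + bx + c, and let f(X) = (F'(X)² − (8X + 4a)F(X))/(4F(X)) be the Lattès map associated to duplication. If disc(F) < 0 (so F has exactly one real root α), then f : ℙ¹(ℝ) → ℙ¹(ℝ) is surjective. -/
/-!
Translating by a real root `α` of `F`, the Lattès map becomes
`f(α + t) - α = (t² - q)² / (4t(t² + pt + q))`, and `disc F = (p² - 4q) q²`, so `disc F < 0`
makes `t² + pt + q` positive. On `t > 0` this function is continuous, vanishes at `t = √q` and
tends to `+∞`, so it takes every value `≥ 0`; the symmetry `t ↦ -t`, `p ↦ -p` gives the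
values `≤ 0`.
-/

open OnePoint

/-- The Lattès map `f(X) = (F'(X)² - (8X + 4a)F(X))/(4F(X))` (where `F = X³+aX²+bX+c`)
associated to duplication on `y² = F(x)`, extended to a self-map of `ℙ¹(ℝ) = ℝ ∪ {∞}`:
poles (real roots of `F`) and `∞` are sent to `∞`. -/
noncomputable def lattesExt (a b c : ℝ) : OnePoint ℝ → OnePoint ℝ := fun p =>
  Option.elim p ∞ fun x =>
    let F : ℝ → ℝ := fun t => t ^ 3 + a * t ^ 2 + b * t + c
    let F' : ℝ → ℝ := fun t => 3 * t ^ 2 + 2 * a * t + b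
    if F x = 0 then ∞
    else ((F' x ^ 2 - (8 * x + 4 * a) * F x) / (4 * F x) : ℝ)

open Polynomial Filter Set

/-- `f(α + t) - α` for a real root `α` of `F`, with `p = F''(α)/2` and `q = F'(α)`. -/
noncomputable def shiftedLattes (p q t : ℝ) : ℝ :=
  (t ^ 2 - q) ^ 2 / (4 * (t * (t ^ 2 + p * t + q)))

lemma tendsto_cubic_atTop (a b c : ℝ) :
    Tendsto (fun x : ℝ => x ^ 3 + a * x ^ 2 + b * x + c) atTop atTop := by
  have hdeg : (X ^ 3 + C a * X ^ 2 + C b * X + C c : ℝ[X]).degree = 3 := by compute_degree!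
  have hmonic : (X ^ 3 + C a * X ^ 2 + C b * X + C c : ℝ[X]).Monic := by monicity!
  convert tendsto_atTop_of_leadingCoeff_nonneg _ (by rw [hdeg]; norm_num)
    (by rw [hmonic.leadingCoeff]; exact zero_le_one) using 2
  simp

lemma exists_cubic_root (a b c : ℝ) : ∃ α : ℝ, α ^ 3 + a * α ^ 2 + b * α + c = 0 := by
  have hbot : Tendsto (fun x : ℝ => x ^ 3 + a * x ^ 2 + b * x + c) atBot atBot := by
    convert tendsto_neg_atTop_atBot.comp
      ((tendsto_cubic_atTop (-a) b (-c)).comp tendsto_neg_atBot_atTop) using 1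
    ext x
    simp only [Function.comp_apply]
    ring
  exact (by fun_prop : Continuous _).surjective (tendsto_cubic_atTop a b c) hbot 0

lemma sq_lt_of_neg_discriminant {a b c α : ℝ} (hα : α ^ 3 + a * α ^ 2 + b * α + c = 0)
    (hdisc : 18 * a * b * c - 4 * a ^ 3 * c + a ^ 2 * b ^ 2 - 4 * b ^ 3 - 27 * c ^ 2 < 0) :
    (3 * α + a) ^ 2 < 4 * (3 * α ^ 2 + 2 * a * α + b) := by
  have hc : c = -α ^ 3 - a * α ^ 2 - b * α := by linear_combination hα
  have hdisc_eq : 18 * a * b * c - 4 * a ^ 3 * c + a ^ 2 * b ^ 2 - 4 * b ^ 3 - 27 * c ^ 2 =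
      ((3 * α + a) ^ 2 - 4 * (3 * α ^ 2 + 2 * a * α + b)) * (3 * α ^ 2 + 2 * a * α + b) ^ 2 := by
    subst hc
    ring
  rw [hdisc_eq] at hdisc
  exact sub_neg.mp (neg_of_mul_neg_left hdisc (sq_nonneg _))

lemma quadratic_pos_of_sq_lt {p q : ℝ} (hpq : p ^ 2 < 4 * q) (t : ℝ) : 0 < t ^ 2 + p * t + q := by
  nlinarith [sq_nonneg (2 * t + p)]

lemma lattesExt_coe_root_add {a b c α : ℝ} (hα : α ^ 3 + a * α ^ 2 + b * α + c = 0) {t : ℝ}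
    (ht : t * (t ^ 2 + (3 * α + a) * t + (3 * α ^ 2 + 2 * a * α + b)) ≠ 0) :
    lattesExt a b c (α + t : ℝ) =
      (α + shiftedLattes (3 * α + a) (3 * α ^ 2 + 2 * a * α + b) t : ℝ) := by
  obtain rfl : c = -α ^ 3 - a * α ^ 2 - b * α := by linear_combination hα
  have hF : (α + t) ^ 3 + a * (α + t) ^ 2 + b * (α + t) + (-α ^ 3 - a * α ^ 2 - b * α) =
      t * (t ^ 2 + (3 * α + a) * t + (3 * α ^ 2 + 2 * a * α + b)) := by
    ring
  simp only [lattesExt, Option.elim, hF, ht, if_false, shiftedLattes]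
  rw [add_div' _ _ _ (mul_ne_zero four_ne_zero ht)]
  congr 2
  ring

lemma shiftedLattes_neg (p q t : ℝ) : shiftedLattes p q (-t) = -shiftedLattes (-p) q t := by
  simp only [shiftedLattes]
  rw [← div_neg]
  congr 1 <;> ring

lemma tendsto_shiftedLattes_atTop (p q : ℝ) : Tendsto (shiftedLattes p q) atTop atTop := by
  have hP : ((X ^ 2 - C q) ^ 2 : ℝ[X]).Monic := by monicity!
  have hQ : (X * (X ^ 2 + C p * X + C q) : ℝ[X]).Monic := by monicity!
  have hdeg :
      (X * (X ^ 2 + C p * X + C q) : ℝ[X]).degree < ((X ^ 2 - C q) ^ 2 : ℝ[X]).degree := by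
    rw [show ((X ^ 2 - C q) ^ 2 : ℝ[X]).degree = 4 by compute_degree!,
      show (X * (X ^ 2 + C p * X + C q) : ℝ[X]).degree = 3 by compute_degree!]
    norm_num
  have h := (div_tendsto_atTop_of_degree_gt' _ _ hdeg
    (by rw [hP.leadingCoeff, hQ.leadingCoeff]; norm_num)).atTop_div_const four_pos
  convert h using 2
  simp only [shiftedLattes, eval_mul, eval_pow, eval_sub, eval_add, eval_X, eval_C]
  rw [div_div, mul_comm]

lemma exists_pos_shiftedLattes_eq {p q r : ℝ} (hpq : p ^ 2 < 4 * q) (hr : 0 ≤ r) :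
    ∃ t > 0, shiftedLattes p q t = r := by
  have hq : 0 < q := by nlinarith [sq_nonneg p]
  have hs : 0 < √q := Real.sqrt_pos.mpr hq
  have hcont : ContinuousOn (shiftedLattes p q) (Ici √q) := by
    refine ContinuousOn.div (by fun_prop) (by fun_prop) fun t ht => ?_
    have := hs.trans_le ht
    have := quadratic_pos_of_sq_lt hpq t
    positivity
  have hzero : shiftedLattes p q √q = 0 := by simp [shiftedLattes, Real.sq_sqrt hq.le]
  obtain ⟨t, ht, rfl⟩ := intermediate_value_Ici hcont (tendsto_shiftedLattes_atTop p q)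
    (hzero.symm ▸ hr : r ∈ Ici (shiftedLattes p q √q))
  exact ⟨t, hs.trans_le ht, rfl⟩

lemma exists_ne_zero_shiftedLattes_eq {p q : ℝ} (hpq : p ^ 2 < 4 * q) (r : ℝ) :
    ∃ t ≠ 0, shiftedLattes p q t = r := by
  rcases le_total 0 r with hr | hr
  · obtain ⟨t, ht, htr⟩ := exists_pos_shiftedLattes_eq hpq hr
    exact ⟨t, ht.ne', htr⟩
  · obtain ⟨t, ht, htr⟩ :=
      exists_pos_shiftedLattes_eq (p := -p) (by rwa [neg_sq]) (neg_nonneg.mpr hr)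
    exact ⟨-t, neg_ne_zero.mpr ht.ne', by rw [shiftedLattes_neg, htr, neg_neg]⟩

/-- If the cubic `F(x) = x³ + ax² + bx + c` has negative discriminant, then the Lattès
map associated to duplication on the elliptic curve `y² = F(x)` is surjective as a
self-map of `ℙ¹(ℝ)`. -/
theorem lattes_surjective_of_neg_discriminant (a b c : ℝ)
    (hdisc : 18 * a * b * c - 4 * a ^ 3 * c + a ^ 2 * b ^ 2 - 4 * b ^ 3 - 27 * c ^ 2 < 0) :
    Function.Surjective (lattesExt a b c) := by
  intro y
  induction y using OnePoint.rec with
  | infty => exact ⟨∞, rfl⟩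
  | coe r =>
    obtain ⟨α, hα⟩ := exists_cubic_root a b c
    have hpq := sq_lt_of_neg_discriminant hα hdisc
    obtain ⟨t, ht, htr⟩ := exists_ne_zero_shiftedLattes_eq hpq (r - α)
    refine ⟨(α + t : ℝ), ?_⟩
    rw [lattesExt_coe_root_add hα (mul_ne_zero ht (quadratic_pos_of_sq_lt hpq t).ne'), htr,
      add_sub_cancel]
end
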